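/- arXiv:2207.13995 — 11 statements merged into one kernel-verified Lean document; each statement's English description precedes it below -/
import Mathlib

section
/- Let V →^R g be a relative Rota-Baxter Leibniz algebra. Then the adjoint data (V →^R g, l_ad, r_ad) — where g carries the adjoint representation of itself, V carries the given representation, and the pairings are l_ad = r_V : V ⊗ g → V and r_ad = l_V : g ⊗ V → V — is a representation of the rRB Leibniz algebra V →^R g. -/
/-- A (left) Leibniz bracket. -/
def IsLeibniz {g : Type*} [AddCommGroup g] (br : g → g → g) : Prop :=
  ∀ x y z, br x (br y z) = br (br x y) z + br y (br x z)

/-- A representation of a Leibniz algebra. -/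
def IsLeibnizRep {g U : Type*} [AddCommGroup g] [AddCommGroup U]
    (br : g → g → g) (l : g → U → U) (r : U → g → U) : Prop :=
  (∀ x y v, l x (l y v) = l (br x y) v + l y (l x v)) ∧
  (∀ x y v, l x (r v y) = r (l x v) y + r v (br x y)) ∧
  (∀ x y v, r v (br x y) = r (r v x) y + l x (r v y))

/-- A relative Rota-Baxter operator. -/
def IsRBO {g V : Type*} [AddCommGroup g] [AddCommGroup V]
    (br : g → g → g) (lV : g → V → V) (rV : V → g → V) (R : V → g) : Prop :=
  ∀ v v', br (R v) (R v') = R (lV (R v) v' + rV v (R v'))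

/-- A representation of a relative Rota-Baxter Leibniz algebra `V →^R g`:
a `2`-term complex `S : W → H` with `H`, `W` representations of `g`, together with
pairings `l : V ⊗ H → W` and `r : H ⊗ V → W` satisfying the eight compatibility
identities. -/
def IsRRBRep {g V H W : Type*} [AddCommGroup g] [AddCommGroup V]
    [AddCommGroup H] [AddCommGroup W]
    (br : g → g → g) (lV : g → V → V) (rV : V → g → V) (R : V → g)
    (lh : g → H → H) (rh : H → g → H) (lW : g → W → W) (rW : W → g → W)
    (S : W → H) (l : V → H → W) (r : H → V → W) : Prop :=
  IsLeibnizRep br lh rh ∧ IsLeibnizRep br lW rW ∧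
  (∀ x v hh, lW x (l v hh) = l (lV x v) hh + l v (lh x hh)) ∧
  (∀ x v hh, l v (lh x hh) = l (rV v x) hh + lW x (l v hh)) ∧
  (∀ x v hh, l v (rh hh x) = rW (l v hh) x + r hh (rV v x)) ∧
  (∀ x v hh, lW x (r hh v) = r (lh x hh) v + r hh (lV x v)) ∧
  (∀ x v hh, r hh (lV x v) = r (rh hh x) v + lW x (r hh v)) ∧
  (∀ x v hh, r hh (rV v x) = rW (r hh v) x + l v (rh hh x)) ∧
  (∀ v w, lh (R v) (S w) = S (lW (R v) w + l v (S w))) ∧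
  (∀ v w, rh (S w) (R v) = S (r (S w) v + rW w (R v)))

/-- the adjoint representation of a relative Rota-Baxter Leibniz algebra
`V →^R g` on itself: `g` with the adjoint `g`-representation, `V` with the given one,
`S = R`, and pairings `l_ad = r_V`, `r_ad = l_V`. -/
theorem adjoint_isRRBRep
    {k g V : Type*} [Field k] [AddCommGroup g] [Module k g]
    [AddCommGroup V] [Module k V]
    (br : g →ₗ[k] g →ₗ[k] g) (lV : g →ₗ[k] V →ₗ[k] V) (rV : V →ₗ[k] g →ₗ[k] V)
    (R : V →ₗ[k] g)
    (hg : IsLeibniz (fun x y => br x y))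
    (hrep : IsLeibnizRep (fun x y => br x y) (fun x v => lV x v) (fun v x => rV v x))
    (hR : IsRBO (fun x y => br x y) (fun x v => lV x v) (fun v x => rV v x) (fun v => R v)) :
    IsRRBRep (fun x y => br x y) (fun x v => lV x v) (fun v x => rV v x) (fun v => R v)
      (fun x y => br x y) (fun y x => br y x)
      (fun x v => lV x v) (fun v x => rV v x)
      (fun v => R v)
      (fun v x => rV v x) (fun x v => lV x v) := by
  obtain ⟨h1, h2, h3⟩ := hrep
  exact ⟨⟨fun x y z => hg x y z, fun x y v => hg x v y, fun x y v => hg v x y⟩,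
    ⟨h1, h2, h3⟩,
    fun x v h => h2 x h v, fun x v h => h3 x h v, fun x v h => h3 h x v,
    fun x v h => h1 x h v, fun x v h => h1 h x v, fun x v h => h2 h x v,
    fun v w => hR v w, fun v w => hR w v⟩
end

section
/- Let (g, R) be a Rota-Baxter Leibniz algebra and (V, R_V) a representation of it, i.e., V is a g-representation and R_V : V → V satisfies l_V(R(x), R_V(v)) = R_V(l_V(R(x),v) + l_V(x, R_V(v))) and r_V(R_V(v), R(x)) = R_V(r_V(R_V(v),x) + r_V(v, R(x))). Then (V →^{R_V} V, l_V, r_V) is a representation of the rRB Leibniz algebra g →^R g (g with its adjoint representation). -/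
/-- a representation `(V, R_V)` of a Rota-Baxter Leibniz algebra `(g, R)`
gives a representation `(V →^{R_V} V, l_V, r_V)` of the rRB Leibniz algebra
`g →^R g` (on the adjoint representation). -/
theorem rb_rep_isRRBRep
    {k g V : Type*} [Field k] [AddCommGroup g] [Module k g]
    [AddCommGroup V] [Module k V]
    (br : g →ₗ[k] g →ₗ[k] g) (R : g →ₗ[k] g)
    (lV : g →ₗ[k] V →ₗ[k] V) (rV : V →ₗ[k] g →ₗ[k] V) (RV : V →ₗ[k] V)
    (hg : IsLeibniz (fun x y => br x y))
    (hR : IsRBO (fun x y => br x y) (fun x y => br x y) (fun y x => br y x) (fun x => R x))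
    (hrep : IsLeibnizRep (fun x y => br x y) (fun x v => lV x v) (fun v x => rV v x))
    (h1 : ∀ x v, lV (R x) (RV v) = RV (lV (R x) v + lV x (RV v)))
    (h2 : ∀ x v, rV (RV v) (R x) = RV (rV (RV v) x + rV v (R x))) :
    IsRRBRep (fun x y => br x y) (fun x y => br x y) (fun y x => br y x) (fun x => R x)
      (fun x v => lV x v) (fun v x => rV v x)
      (fun x v => lV x v) (fun v x => rV v x)
      (fun v => RV v)
      (fun x v => lV x v) (fun v x => rV v x) := by
  obtain ⟨A, B, C⟩ := hrep
  exact ⟨⟨A, B, C⟩, ⟨A, B, C⟩,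
    fun x v hh => A x v hh,
    fun x v hh => A v x hh,
    fun x v hh => B v x hh,
    fun x v hh => B x v hh,
    fun x v hh => C x v hh,
    fun x v hh => C v x hh,
    h1, h2⟩
end

section
/- Let V →^R g be a rRB Leibniz algebra and (W →^S h, l, r) a representation of it. Define for the dual spaces: dual g-representations on W* and h* by l_*(x,f)(u) = -f(l(x,u)) and r_*(f,x)(u) = f(l(x,u) + r(u,x)), and pairings l* : V ⊗ W* → h* and r* : W* ⊗ V → h* by l*(v, f_W)(h) = -f_W(l(v,h)) and r*(f_W, v)(h) = f_W(l(v,h) + r(h,v)). Then (h* →^{-S*} W*, l*, r*) is a representation of the rRB Leibniz algebra V →^R g. -/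
lemma dual_leibnizRep' {k g U : Type*} [Field k] [AddCommGroup g] [Module k g]
    [AddCommGroup U] [Module k U]
    (br : g →ₗ[k] g →ₗ[k] g) (lU : g →ₗ[k] U →ₗ[k] U) (rU : U →ₗ[k] g →ₗ[k] U)
    (h : IsLeibnizRep (fun x y => br x y) (fun x u => lU x u) (fun u x => rU u x)) :
    IsLeibnizRep (fun x y => br x y)
      (fun (x : g) (f : Module.Dual k U) => -(f ∘ₗ lU x))
      (fun (f : Module.Dual k U) (x : g) => f ∘ₗ (lU x + rU.flip x)) := by
  obtain ⟨h1, h2, h3⟩ := h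
  refine ⟨fun x y f => ?_, fun x y f => ?_, fun x y f => ?_⟩ <;> ext u
  · have e1 := congrArg f (h1 x y u)
    simp only [map_add] at e1
    simp only [LinearMap.neg_apply, LinearMap.comp_apply, LinearMap.add_apply,
      LinearMap.flip_apply, map_add, map_neg, neg_neg]
    linear_combination -e1
  · have e1 := congrArg f (h1 x y u)
    have e2 := congrArg f (h2 x y u)
    simp only [map_add] at e1 e2
    simp only [LinearMap.neg_apply, LinearMap.comp_apply, LinearMap.add_apply,
      LinearMap.flip_apply, map_add, map_neg, neg_neg]
    linear_combination e1 + e2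
  · have e1 := congrArg f (h1 x y u)
    have e2 := congrArg f (h2 x y u)
    have e3 := congrArg f (h3 y x u)
    have e4 := congrArg f (h2 y x u)
    simp only [map_add] at e1 e2 e3 e4
    simp only [LinearMap.neg_apply, LinearMap.comp_apply, LinearMap.add_apply,
      LinearMap.flip_apply, map_add, map_neg, neg_neg]
    linear_combination -e1 - e2 + e3 + e4

/-- the dual of a representation `(W →^S H, l, r)` of a relative
Rota-Baxter Leibniz algebra `V →^R g` is the representation `(H* →^{-S*} W*, l*, r*)`,
where `W*`, `H*` carry the dual `g`-representations and
`l*(v,f_W)(h) = -f_W(l(v,h))`, `r*(f_W,v)(h) = f_W(l(v,h) + r(h,v))`. -/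
theorem dual_isRRBRep
    {k g V H W : Type*} [Field k] [AddCommGroup g] [Module k g]
    [AddCommGroup V] [Module k V] [AddCommGroup H] [Module k H]
    [AddCommGroup W] [Module k W]
    (br : g →ₗ[k] g →ₗ[k] g) (lV : g →ₗ[k] V →ₗ[k] V) (rV : V →ₗ[k] g →ₗ[k] V)
    (R : V →ₗ[k] g)
    (lh : g →ₗ[k] H →ₗ[k] H) (rh : H →ₗ[k] g →ₗ[k] H)
    (lW : g →ₗ[k] W →ₗ[k] W) (rW : W →ₗ[k] g →ₗ[k] W)
    (S : W →ₗ[k] H) (l : V →ₗ[k] H →ₗ[k] W) (r : H →ₗ[k] V →ₗ[k] W)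
    (hg : IsLeibniz (fun x y => br x y))
    (hrep : IsLeibnizRep (fun x y => br x y) (fun x v => lV x v) (fun v x => rV v x))
    (hR : IsRBO (fun x y => br x y) (fun x v => lV x v) (fun v x => rV v x) (fun v => R v))
    (hW : IsRRBRep (fun x y => br x y) (fun x v => lV x v) (fun v x => rV v x) (fun v => R v)
      (fun x hh => lh x hh) (fun hh x => rh hh x)
      (fun x w => lW x w) (fun w x => rW w x)
      (fun w => S w) (fun v hh => l v hh) (fun hh v => r hh v)) :
    IsRRBRep (fun x y => br x y) (fun x v => lV x v) (fun v x => rV v x) (fun v => R v)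
      (fun (x : g) (f : Module.Dual k W) => -(f ∘ₗ lW x))
      (fun (f : Module.Dual k W) (x : g) => f ∘ₗ (lW x + rW.flip x))
      (fun (x : g) (f : Module.Dual k H) => -(f ∘ₗ lh x))
      (fun (f : Module.Dual k H) (x : g) => f ∘ₗ (lh x + rh.flip x))
      (fun (f : Module.Dual k H) => -(f ∘ₗ S))
      (fun (v : V) (f : Module.Dual k W) => -(f ∘ₗ l v))
      (fun (f : Module.Dual k W) (v : V) => f ∘ₗ (l v + r.flip v)) := by
  obtain ⟨hH, hWr, i1, i2, i3, i4, i5, i6, i7, i8⟩ := hW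
  simp only at i1 i2 i3 i4 i5 i6 i7 i8
  refine ⟨dual_leibnizRep' br lW rW hWr, dual_leibnizRep' br lh rh hH,
    fun x v f => ?_, fun x v f => ?_, fun x v f => ?_, fun x v f => ?_,
    fun x v f => ?_, fun x v f => ?_, fun v f => ?_, fun v f => ?_⟩ <;> ext u <;>
    simp only [LinearMap.neg_apply, LinearMap.comp_apply, LinearMap.add_apply,
      LinearMap.flip_apply, map_add, map_neg, neg_neg]
  · have e := congrArg f (i1 x v u); simp only [map_add] at e
    linear_combination -e
  · have e := congrArg f (i2 x v u); simp only [map_add] at e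
    linear_combination -e
  · have e2 := congrArg f (i2 x v u); have e3 := congrArg f (i3 x v u)
    simp only [map_add] at e2 e3
    linear_combination e2 + e3
  · have e1 := congrArg f (i1 x v u); have e4 := congrArg f (i4 x v u)
    simp only [map_add] at e1 e4
    linear_combination e1 + e4
  · have e1 := congrArg f (i1 x v u); have e4 := congrArg f (i4 x v u)
    have e3 := congrArg f (i3 x v u); have e6 := congrArg f (i6 x v u)
    simp only [map_add] at e1 e4 e3 e6
    linear_combination -e1 - e4 + e3 + e6
  · have e2 := congrArg f (i2 x v u); have e3 := congrArg f (i3 x v u)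
    have e4 := congrArg f (i4 x v u); have e5 := congrArg f (i5 x v u)
    simp only [map_add] at e2 e3 e4 e5
    linear_combination -e2 - e3 + e4 + e5
  · have e7 := congrArg f (i7 v u); simp only [map_add] at e7
    linear_combination -e7
  · have e7 := congrArg f (i7 v u); have e8 := congrArg f (i8 v u)
    simp only [map_add] at e7 e8
    linear_combination e7 + e8
end

section
/- Let V →^R g be a rRB Leibniz algebra and (W →^S h, l, r) a representation of it. Define l_▷ : V ⊗ h → h by l_▷(v,h) = l_h(R(v), h) - S(l(v,h)) and r_◁ : h ⊗ V → h by r_◁(h,v) = r_h(h, R(v)) - S(r(h,v)). Then (h, l_▷, r_◁) is a representation of the induced Leibniz algebra V_R, where the bracket on V_R is [v,v']_R = l_V(R(v), v') + r_V(v, R(v')). -/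
/-- a representation `(W →^S H, l, r)` of a rRB Leibniz algebra `V →^R g`
makes `H` a representation of the induced Leibniz algebra `V_R` via
`l_▷(v,h) = l_H(R v, h) - S(l(v,h))` and `r_◁(h,v) = r_H(h, R v) - S(r(h,v))`. -/
theorem induced_rep_on_h
    {k g V H W : Type*} [Field k] [AddCommGroup g] [Module k g]
    [AddCommGroup V] [Module k V] [AddCommGroup H] [Module k H]
    [AddCommGroup W] [Module k W]
    (br : g →ₗ[k] g →ₗ[k] g) (lV : g →ₗ[k] V →ₗ[k] V) (rV : V →ₗ[k] g →ₗ[k] V)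
    (R : V →ₗ[k] g)
    (lh : g →ₗ[k] H →ₗ[k] H) (rh : H →ₗ[k] g →ₗ[k] H)
    (lW : g →ₗ[k] W →ₗ[k] W) (rW : W →ₗ[k] g →ₗ[k] W)
    (S : W →ₗ[k] H) (l : V →ₗ[k] H →ₗ[k] W) (r : H →ₗ[k] V →ₗ[k] W)
    (hg : IsLeibniz (fun x y => br x y))
    (hrep : IsLeibnizRep (fun x y => br x y) (fun x v => lV x v) (fun v x => rV v x))
    (hR : IsRBO (fun x y => br x y) (fun x v => lV x v) (fun v x => rV v x) (fun v => R v))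
    (hW : IsRRBRep (fun x y => br x y) (fun x v => lV x v) (fun v x => rV v x) (fun v => R v)
      (fun x hh => lh x hh) (fun hh x => rh hh x)
      (fun x w => lW x w) (fun w x => rW w x)
      (fun w => S w) (fun v hh => l v hh) (fun hh v => r hh v)) :
    IsLeibnizRep (fun v v' : V => lV (R v) v' + rV v (R v'))
      (fun (v : V) (hh : H) => lh (R v) hh - S (l v hh))
      (fun (hh : H) (v : V) => rh hh (R v) - S (r hh v)) := by

  have hlh : IsLeibnizRep (fun x y => br x y) (fun x hh => lh x hh) (fun hh x => rh hh x) := hW.1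
  have hlh1 : ∀ x y h, lh x (lh y h) = lh (br x y) h + lh y (lh x h) := hlh.1
  have hlh2 : ∀ x y h, lh x (rh h y) = rh (lh x h) y + rh h (br x y) := hlh.2.1
  have hlh3 : ∀ x y h, rh h (br x y) = rh (rh h x) y + lh x (rh h y) := hlh.2.2
  have h3 : ∀ x v hh, lW x (l v hh) = l (lV x v) hh + l v (lh x hh) := hW.2.2.1
  have h4 : ∀ x v hh, l v (lh x hh) = l (rV v x) hh + lW x (l v hh) := hW.2.2.2.1
  have h5 : ∀ x v hh, l v (rh hh x) = rW (l v hh) x + r hh (rV v x) := hW.2.2.2.2.1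
  have h6 : ∀ x v hh, lW x (r hh v) = r (lh x hh) v + r hh (lV x v) := hW.2.2.2.2.2.1
  have h7 : ∀ x v hh, r hh (lV x v) = r (rh hh x) v + lW x (r hh v) := hW.2.2.2.2.2.2.1
  have h8 : ∀ x v hh, r hh (rV v x) = rW (r hh v) x + l v (rh hh x) := hW.2.2.2.2.2.2.2.1
  have hS1 : ∀ v w, lh (R v) (S w) = S (lW (R v) w + l v (S w)) := hW.2.2.2.2.2.2.2.2.1
  have hS2 : ∀ v w, rh (S w) (R v) = S (r (S w) v + rW w (R v)) := hW.2.2.2.2.2.2.2.2.2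
  have hR' : ∀ v v', R (lV (R v) v' + rV v (R v')) = br (R v) (R v') := fun v v' => (hR v v').symm
  refine ⟨fun x y v => ?_, fun x y v => ?_, fun x y v => ?_⟩
  · simp only [map_sub, map_add, LinearMap.sub_apply, LinearMap.add_apply, hS1, hR',
      hlh1 (R x) (R y) v, h3 (R x) y v, h4 (R y) x v]
    abel
  · simp only [map_sub, map_add, LinearMap.sub_apply, LinearMap.add_apply, hS1, hS2, hR',
      hlh2 (R x) (R y) v, h5 (R y) x v, h6 (R x) y v]
    abel
  · simp only [map_sub, map_add, LinearMap.sub_apply, LinearMap.add_apply, hS1, hS2, hR',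
      hlh3 (R x) (R y) v, h7 (R x) y v, h8 (R y) x v]
    abel
end

section
/- Let V →^R g be a rRB Leibniz algebra. Define l_▷ : V ⊗ g → g by l_▷(v,x) = [R(v), x] - R(r_V(v,x)) and r_◁ : g ⊗ V → g by r_◁(x,v) = [x, R(v)] - R(l_V(x,v)). Then (g, l_▷, r_◁) is a representation of the induced Leibniz algebra V_R with bracket [v,v']_R = l_V(R(v),v') + r_V(v,R(v')). -/
/-- for a rRB Leibniz algebra `V →^R g`, the space `g` is a representation
of the induced Leibniz algebra `V_R` via `l_▷(v,x) = [R v, x] - R(r_V(v,x))` and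
`r_◁(x,v) = [x, R v] - R(l_V(x,v))`. -/
theorem induced_rep_on_g
    {k g V : Type*} [Field k] [AddCommGroup g] [Module k g]
    [AddCommGroup V] [Module k V]
    (br : g →ₗ[k] g →ₗ[k] g) (lV : g →ₗ[k] V →ₗ[k] V) (rV : V →ₗ[k] g →ₗ[k] V)
    (R : V →ₗ[k] g)
    (hg : IsLeibniz (fun x y => br x y))
    (hrep : IsLeibnizRep (fun x y => br x y) (fun x v => lV x v) (fun v x => rV v x))
    (hR : IsRBO (fun x y => br x y) (fun x v => lV x v) (fun v x => rV v x) (fun v => R v)) :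
    IsLeibnizRep (fun v v' : V => lV (R v) v' + rV v (R v'))
      (fun (v : V) (x : g) => br (R v) x - R (rV v x))
      (fun (x : g) (v : V) => br x (R v) - R (lV x v)) := by
  obtain ⟨rep1, rep2, rep3⟩ := hrep
  -- key consequence of the representation axioms
  have key : ∀ (a : g) (u : V) (b : g), rV (lV a u) b = - rV (rV u a) b := by
    intro a u b
    have h2 := rep2 a b u
    have h3 := rep3 a b u
    simp only at h2 h3
    linear_combination (norm := abel) -h2 - h3
  -- R-applied versions
  have keyR : ∀ (a : g) (u : V) (b : g), R (rV (lV a u) b) = - R (rV (rV u a) b) := by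
    intro a u b; rw [key a u b, map_neg]
  have hR' : ∀ v w, br (R v) (R w) = R (lV (R v) w) + R (rV v (R w)) := by
    intro v w; have := hR v w; simp only at this; rw [this, map_add]
  have hbrR : ∀ v w (x : g), br (br (R v) (R w)) x
      = br (R (lV (R v) w)) x + br (R (rV v (R w))) x := by
    intro v w x; rw [hR' v w, map_add, LinearMap.add_apply]
  have hbrR2 : ∀ (c : g) v w, br c (br (R v) (R w))
      = br c (R (lV (R v) w)) + br c (R (rV v (R w))) := by
    intro c v w; rw [hR' v w, map_add]
  have rep1R : ∀ (a b : g) (u : V), R (lV a (lV b u))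
      = R (lV (br a b) u) + R (lV b (lV a u)) := by
    intro a b u; have := rep1 a b u; simp only at this; rw [this, map_add]
  have rep3R : ∀ (a b : g) (u : V), R (rV u (br a b))
      = R (rV (rV u a) b) + R (lV a (rV u b)) := by
    intro a b u; have := rep3 a b u; simp only at this; rw [this, map_add]
  refine ⟨?_, ?_, ?_⟩
  · intro v v' x
    simp only [map_sub, map_add, LinearMap.sub_apply, LinearMap.add_apply]
    have e1 := hg (R v) (R v') x
    simp only at e1
    have e2 := hbrR v v' x
    have e3 := hR' v (rV v' x)
    have e4 := hR' v' (rV v x)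
    have e5 := rep3R (R v') x v
    have e6 := rep3R (R v) x v'
    have e7 := keyR (R v) v' x
    linear_combination (norm := abel) e1 + e2 - e3 + e4 - e5 + e6 + e7
  · intro v v' c
    simp only [map_sub, map_add, LinearMap.sub_apply, LinearMap.add_apply]
    have f1 := hg (R v) c (R v')
    simp only at f1
    have f2 := hbrR2 c v v'
    have f3 := hR' v (lV c v')
    have f4 := rep3R c (R v') v
    have f5 := hR' (rV v c) v'
    have f6 := rep1R (R v) c v'
    linear_combination (norm := abel) f1 + f2 - f3 - f4 + f5 - f6
  · intro v v' c
    simp only [map_sub, map_add, LinearMap.sub_apply, LinearMap.add_apply]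
    have g1 := hg c (R v) (R v')
    simp only at g1
    have g2 := hbrR2 c v v'
    have g3 := hR' (lV c v) v'
    have g4 := hR' v (lV c v')
    have g5 := rep3R c (R v') v
    have g6 := rep1R c (R v) v'
    have g7 := keyR c v (R v')
    linear_combination (norm := abel) g1 - g2 + g3 + g4 + g5 - g6 + g7
end

section
/- Let V →^R g be a rRB Leibniz algebra and (W →^S h, l, r) a representation of it. Then V ⊕ W is a representation of the semidirect product Leibniz algebra g ⋉ h (bracket [(x,h),(y,k)] = ([x,y], l_h(x,k) + r_h(h,y))) via l_⋉((x,h),(v,w)) := (l_V(x,v), l_W(x,w) + r(h,v)) and r_⋉((v,w),(x,h)) := (r_V(v,x), l(v,h) + r_W(w,x)). -/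
/-- `V ⊕ W` is a representation of the semidirect product Leibniz
algebra `g ⋉ H` via `l_⋉((x,h),(v,w)) = (l_V(x,v), l_W(x,w) + r(h,v))` and
`r_⋉((v,w),(x,h)) = (r_V(v,x), l(v,h) + r_W(w,x))`. -/
theorem semidirect_isLeibnizRep
    {k g V H W : Type*} [Field k] [AddCommGroup g] [Module k g]
    [AddCommGroup V] [Module k V] [AddCommGroup H] [Module k H]
    [AddCommGroup W] [Module k W]
    (br : g →ₗ[k] g →ₗ[k] g) (lV : g →ₗ[k] V →ₗ[k] V) (rV : V →ₗ[k] g →ₗ[k] V)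
    (R : V →ₗ[k] g)
    (lh : g →ₗ[k] H →ₗ[k] H) (rh : H →ₗ[k] g →ₗ[k] H)
    (lW : g →ₗ[k] W →ₗ[k] W) (rW : W →ₗ[k] g →ₗ[k] W)
    (S : W →ₗ[k] H) (l : V →ₗ[k] H →ₗ[k] W) (r : H →ₗ[k] V →ₗ[k] W)
    (hg : IsLeibniz (fun x y => br x y))
    (hrep : IsLeibnizRep (fun x y => br x y) (fun x v => lV x v) (fun v x => rV v x))
    (hR : IsRBO (fun x y => br x y) (fun x v => lV x v) (fun v x => rV v x) (fun v => R v))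
    (hW : IsRRBRep (fun x y => br x y) (fun x v => lV x v) (fun v x => rV v x) (fun v => R v)
      (fun x hh => lh x hh) (fun hh x => rh hh x)
      (fun x w => lW x w) (fun w x => rW w x)
      (fun w => S w) (fun v hh => l v hh) (fun hh v => r hh v))
    :
    IsLeibnizRep (fun p q : g × H => (br p.1 q.1, lh p.1 q.2 + rh p.2 q.1))
      (fun (p : g × H) (u : V × W) => (lV p.1 u.1, lW p.1 u.2 + r p.2 u.1))
      (fun (u : V × W) (p : g × H) => (rV u.1 p.1, l u.1 p.2 + rW u.2 p.1)) := by

  obtain ⟨⟨hh1, hh2, hh3⟩, ⟨hw1, hw2, hw3⟩, c3, c4, c5, c6, c7, c8, _, _⟩ := hW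
  obtain ⟨hv1, hv2, hv3⟩ := hrep
  simp only [] at *
  refine ⟨fun p q u => ?_, fun p q u => ?_, fun p q u => ?_⟩ <;>
    obtain ⟨x, hx⟩ := p <;> obtain ⟨y, hy⟩ := q <;> obtain ⟨v, w⟩ := u <;>
    refine Prod.ext ?_ ?_ <;>
    simp only [map_add, LinearMap.add_apply, Prod.fst_add, Prod.snd_add]
  · exact hv1 x y v
  · rw [hw1 x y w, c6 x v hy, c7 y v hx]; abel
  · exact hv2 x y v
  · rw [hw2 x y w, c3 x v hy, c8 y v hx]; abel
  · exact hv3 x y v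
  · rw [hw3 x y w, c4 x v hy, c5 y v hx]; abel
end

section
/- Let V →^R g be a rRB Leibniz algebra and (W →^S h, l, r) a representation. With the semidirect product Leibniz algebra structure on g ⊕ h and the representation structure on V ⊕ W (l_⋉((x,h),(v,w)) = (l_V(x,v), l_W(x,w) + r(h,v)), r_⋉((v,w),(x,h)) = (r_V(v,x), l(v,h) + r_W(w,x))), the map R ⊕ S : V ⊕ W → g ⊕ h, (v,w) ↦ (R(v), S(w)), is a relative Rota-Baxter operator. Hence V ⊕ W →^{R⊕S} g ⊕ h is a rRB Leibniz algebra. -/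
/-- `R ⊕ S : V ⊕ W → g ⊕ H` is a relative Rota-Baxter operator for the
semidirect product structures; hence `V ⊕ W →^{R ⊕ S} g ⊕ H` is a rRB Leibniz
algebra. -/
theorem semidirect_isRBO
    {k g V H W : Type*} [Field k] [AddCommGroup g] [Module k g]
    [AddCommGroup V] [Module k V] [AddCommGroup H] [Module k H]
    [AddCommGroup W] [Module k W]
    (br : g →ₗ[k] g →ₗ[k] g) (lV : g →ₗ[k] V →ₗ[k] V) (rV : V →ₗ[k] g →ₗ[k] V)
    (R : V →ₗ[k] g)
    (lh : g →ₗ[k] H →ₗ[k] H) (rh : H →ₗ[k] g →ₗ[k] H)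
    (lW : g →ₗ[k] W →ₗ[k] W) (rW : W →ₗ[k] g →ₗ[k] W)
    (S : W →ₗ[k] H) (l : V →ₗ[k] H →ₗ[k] W) (r : H →ₗ[k] V →ₗ[k] W)
    (hg : IsLeibniz (fun x y => br x y))
    (hrep : IsLeibnizRep (fun x y => br x y) (fun x v => lV x v) (fun v x => rV v x))
    (hR : IsRBO (fun x y => br x y) (fun x v => lV x v) (fun v x => rV v x) (fun v => R v))
    (hW : IsRRBRep (fun x y => br x y) (fun x v => lV x v) (fun v x => rV v x) (fun v => R v)
      (fun x hh => lh x hh) (fun hh x => rh hh x)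
      (fun x w => lW x w) (fun w x => rW w x)
      (fun w => S w) (fun v hh => l v hh) (fun hh v => r hh v))
    :
    IsRBO (fun p q : g × H => (br p.1 q.1, lh p.1 q.2 + rh p.2 q.1))
      (fun (p : g × H) (u : V × W) => (lV p.1 u.1, lW p.1 u.2 + r p.2 u.1))
      (fun (u : V × W) (p : g × H) => (rV u.1 p.1, l u.1 p.2 + rW u.2 p.1))
      (fun u : V × W => (R u.1, S u.2)) := by
  obtain ⟨-, -, -, -, -, -, -, -, h9, h10⟩ := hW
  rintro ⟨v, w⟩ ⟨v', w'⟩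
  refine Prod.ext (hR v v') ?_
  beta_reduce at h9 h10
  simp only [map_add]
  rw [h9 v w', h10 v' w]
  simp only [Prod.mk_add_mk, map_add]
  abel
end

section
/- Let V →^R g and V' →^{R'} g' be rRB Leibniz algebras and (φ, ψ) a morphism between them. Then the triple (V' →^{R'} g', l, r) is a representation of V →^R g, where g' and V' become g-representations via l_{g'}(x,x') = [φ(x), x']_{g'}, r_{g'}(x',x) = [x', φ(x)]_{g'}, l_{V'}(x,v') = l'(φ(x), v'), r_{V'}(v',x) = r'(v', φ(x)), and the pairings are l(v,x') = r'(ψ(v), x') and r(x',v) = l'(x', ψ(v)). -/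
/-- a morphism `(φ, ψ) : (V →^R g) → (V' →^{R'} g')` of rRB Leibniz
algebras makes `(V' →^{R'} g', l, r)` a representation of `V →^R g`, where `g'` and
`V'` are `g`-representations via `φ`, and the pairings are `l(v,x') = r'(ψ v, x')`,
`r(x',v) = l'(x', ψ v)`. -/
theorem morphism_target_isRRBRep
    {k g V g' V' : Type*} [Field k] [AddCommGroup g] [Module k g]
    [AddCommGroup V] [Module k V] [AddCommGroup g'] [Module k g']
    [AddCommGroup V'] [Module k V']
    (br : g →ₗ[k] g →ₗ[k] g) (lV : g →ₗ[k] V →ₗ[k] V) (rV : V →ₗ[k] g →ₗ[k] V)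
    (R : V →ₗ[k] g)
    (br' : g' →ₗ[k] g' →ₗ[k] g') (lV' : g' →ₗ[k] V' →ₗ[k] V') (rV' : V' →ₗ[k] g' →ₗ[k] V')
    (R' : V' →ₗ[k] g')
    (φ : g →ₗ[k] g') (ψ : V →ₗ[k] V')
    (hg : IsLeibniz (fun x y => br x y))
    (hrep : IsLeibnizRep (fun x y => br x y) (fun x v => lV x v) (fun v x => rV v x))
    (hR : IsRBO (fun x y => br x y) (fun x v => lV x v) (fun v x => rV v x) (fun v => R v))
    (hg' : IsLeibniz (fun x y => br' x y))
    (hrep' : IsLeibnizRep (fun x y => br' x y) (fun x v => lV' x v) (fun v x => rV' v x))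
    (hR' : IsRBO (fun x y => br' x y) (fun x v => lV' x v) (fun v x => rV' v x) (fun v => R' v))
    (hφ : ∀ x y, φ (br x y) = br' (φ x) (φ y))
    (hψl : ∀ x v, ψ (lV x v) = lV' (φ x) (ψ v))
    (hψr : ∀ v x, ψ (rV v x) = rV' (ψ v) (φ x))
    (hφR : ∀ v, φ (R v) = R' (ψ v)) :
    IsRRBRep (fun x y => br x y) (fun x v => lV x v) (fun v x => rV v x) (fun v => R v)
      (fun (x : g) (x' : g') => br' (φ x) x') (fun (x' : g') (x : g) => br' x' (φ x))
      (fun (x : g) (v' : V') => lV' (φ x) v') (fun (v' : V') (x : g) => rV' v' (φ x))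
      (fun v' => R' v')
      (fun (v : V) (x' : g') => rV' (ψ v) x') (fun (x' : g') (v : V) => lV' x' (ψ v)) := by
  obtain ⟨h1, h2, h3⟩ := hrep'
  refine ⟨⟨fun x y h => ?_, fun x y h => ?_, fun x y h => ?_⟩,
    ⟨fun x y v => ?_, fun x y v => ?_, fun x y v => ?_⟩,
    fun x v h => ?_, fun x v h => ?_, fun x v h => ?_,
    fun x v h => ?_, fun x v h => ?_, fun x v h => ?_,
    fun v w => ?_, fun v w => ?_⟩
  · simp only [hφ]; exact hg' (φ x) (φ y) h
  · simp only [hφ]; exact hg' (φ x) h (φ y)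
  · simp only [hφ]; exact hg' h (φ x) (φ y)
  · simp only [hφ]; exact h1 (φ x) (φ y) v
  · simp only [hφ]; exact h2 (φ x) (φ y) v
  · simp only [hφ]; exact h3 (φ x) (φ y) v
  · simp only [hψl]; exact h2 (φ x) h (ψ v)
  · simp only [hψr]; exact h3 (φ x) h (ψ v)
  · simp only [hψr]; exact h3 h (φ x) (ψ v)
  · simp only [hψl]; exact h1 (φ x) h (ψ v)
  · simp only [hψl]; exact h1 h (φ x) (ψ v)
  · simp only [hψr]; exact h2 h (φ x) (ψ v)
  · simp only [hφR]; exact hR' (ψ v) w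
  · simp only [hφR]; exact hR' w (ψ v)
end

section
/- Let V →^R g be a rRB Leibniz algebra and (α, β, γ) a 2-cocycle in the cochain complex of V →^R g with coefficients in a representation (W →^S h, l, r), where α ∈ Hom(g⊗g, h), β ∈ Hom(g^{1,1}, W), γ ∈ Hom(V, h). Define on ĝ = g ⊕ h the bracket [(x,h₁),(y,k)] = ([x,y], l_h(x,k) + r_h(h₁,y) + α(x,y)), on V̂ = V ⊕ W the actions l̂((x,h₁),(v,w)) = (l_V(x,v), l_W(x,w) + r(h₁,v) + β(x,v)) and r̂((v,w),(x,h₁)) = (r_V(v,x), l(v,h₁) + r_W(w,x) + β(v,x)), and R̂((v,w)) = (R(v), S(w) + γ(v)). Then V̂ →^{R̂} ĝ is a rRB Leibniz algebra, and it is an abelian extension of V →^R g by W →^S h. -/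
/-- The bracket on `g ⊕ H` twisted by a `2`-cochain `α`. -/
def extBr {k g H : Type*} [Field k] [AddCommGroup g] [Module k g]
    [AddCommGroup H] [Module k H]
    (br : g →ₗ[k] g →ₗ[k] g) (lh : g →ₗ[k] H →ₗ[k] H) (rh : H →ₗ[k] g →ₗ[k] H)
    (α : g →ₗ[k] g →ₗ[k] H) : g × H → g × H → g × H :=
  fun p q => (br p.1 q.1, lh p.1 q.2 + rh p.2 q.1 + α p.1 q.1)

/-- The left action of `g ⊕ H` on `V ⊕ W` twisted by a mixed `2`-cochain `β₁`. -/
def extL {k g V H W : Type*} [Field k] [AddCommGroup g] [Module k g]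
    [AddCommGroup V] [Module k V] [AddCommGroup H] [Module k H]
    [AddCommGroup W] [Module k W]
    (lV : g →ₗ[k] V →ₗ[k] V) (lW : g →ₗ[k] W →ₗ[k] W) (r : H →ₗ[k] V →ₗ[k] W)
    (β₁ : g →ₗ[k] V →ₗ[k] W) : g × H → V × W → V × W :=
  fun p u => (lV p.1 u.1, lW p.1 u.2 + r p.2 u.1 + β₁ p.1 u.1)

/-- The right action of `g ⊕ H` on `V ⊕ W` twisted by a mixed `2`-cochain `β₂`. -/
def extR {k g V H W : Type*} [Field k] [AddCommGroup g] [Module k g]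
    [AddCommGroup V] [Module k V] [AddCommGroup H] [Module k H]
    [AddCommGroup W] [Module k W]
    (rV : V →ₗ[k] g →ₗ[k] V) (rW : W →ₗ[k] g →ₗ[k] W) (l : V →ₗ[k] H →ₗ[k] W)
    (β₂ : V →ₗ[k] g →ₗ[k] W) : V × W → g × H → V × W :=
  fun u p => (rV u.1 p.1, l u.1 p.2 + rW u.2 p.1 + β₂ u.1 p.1)

/-- The operator `V ⊕ W → g ⊕ H` twisted by a `1`-cochain `γ`. -/
def extOp {k g V H W : Type*} [Field k] [AddCommGroup g] [Module k g]
    [AddCommGroup V] [Module k V] [AddCommGroup H] [Module k H]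
    [AddCommGroup W] [Module k W]
    (R : V →ₗ[k] g) (S : W →ₗ[k] H) (γ : V →ₗ[k] H) : V × W → g × H :=
  fun u => (R u.1, S u.2 + γ u.1)

/-- a `2`-cocycle `(α, β, γ)` of a rRB Leibniz algebra `V →^R g` with
coefficients in a representation `(W →^S H, l, r)` gives rise to a rRB Leibniz algebra
structure on `V ⊕ W →^{R̂} g ⊕ H`, which is an abelian extension of `V →^R g` by
`W →^S H`. Here `β` has components `β₁ : g ⊗ V → W` and `β₂ : V ⊗ g → W`. -/
theorem cocycle_gives_abelian_extension
    {k g V H W : Type*} [Field k] [AddCommGroup g] [Module k g]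
    [AddCommGroup V] [Module k V] [AddCommGroup H] [Module k H]
    [AddCommGroup W] [Module k W]
    (br : g →ₗ[k] g →ₗ[k] g) (lV : g →ₗ[k] V →ₗ[k] V) (rV : V →ₗ[k] g →ₗ[k] V)
    (R : V →ₗ[k] g)
    (lh : g →ₗ[k] H →ₗ[k] H) (rh : H →ₗ[k] g →ₗ[k] H)
    (lW : g →ₗ[k] W →ₗ[k] W) (rW : W →ₗ[k] g →ₗ[k] W)
    (S : W →ₗ[k] H) (l : V →ₗ[k] H →ₗ[k] W) (r : H →ₗ[k] V →ₗ[k] W)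
    (hg : IsLeibniz (fun x y => br x y))
    (hrep : IsLeibnizRep (fun x y => br x y) (fun x v => lV x v) (fun v x => rV v x))
    (hR : IsRBO (fun x y => br x y) (fun x v => lV x v) (fun v x => rV v x) (fun v => R v))
    (hW : IsRRBRep (fun x y => br x y) (fun x v => lV x v) (fun v x => rV v x) (fun v => R v)
      (fun x hh => lh x hh) (fun hh x => rh hh x)
      (fun x w => lW x w) (fun w x => rW w x)
      (fun w => S w) (fun v hh => l v hh) (fun hh v => r hh v))
    (α : g →ₗ[k] g →ₗ[k] H) (β₁ : g →ₗ[k] V →ₗ[k] W) (β₂ : V →ₗ[k] g →ₗ[k] W)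
    (γ : V →ₗ[k] H)
    (hc1 : ∀ x y z, lh x (α y z) - lh y (α x z) - rh (α x y) z
      - α (br x y) z - α y (br x z) + α x (br y z) = 0)
    (hc2 : ∀ (x y : g) (v : V), lW x (β₁ y v) - lW y (β₁ x v) - r (α x y) v
      - β₁ (br x y) v - β₁ y (lV x v) + β₁ x (lV y v) = 0)
    (hc3 : ∀ (x : g) (v : V) (y : g), lW x (β₂ v y) - l v (α x y) - rW (β₁ x v) y
      - β₂ (lV x v) y - β₂ v (br x y) + β₁ x (rV v y) = 0)
    (hc4 : ∀ (v : V) (x y : g), l v (α x y) - lW x (β₂ v y) - rW (β₂ v x) y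
      - β₂ (rV v x) y - β₁ x (rV v y) + β₂ v (br x y) = 0)
    (hc5 : ∀ v₁ v₂ : V, lh (R v₁) (γ v₂) - S (l v₁ (γ v₂))
      + rh (γ v₁) (R v₂) - S (r (γ v₁) v₂)
      - γ (lV (R v₁) v₂ + rV v₁ (R v₂))
      + α (R v₁) (R v₂) - S (β₂ v₁ (R v₂)) - S (β₁ (R v₁) v₂) = 0)
    :
    IsLeibniz (extBr br lh rh α) ∧
    IsLeibnizRep (extBr br lh rh α) (extL lV lW r β₁) (extR rV rW l β₂) ∧
    IsRBO (extBr br lh rh α) (extL lV lW r β₁) (extR rV rW l β₂) (extOp R S γ) ∧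
    (∀ h₁ h₂ : H, extBr br lh rh α (0, h₁) (0, h₂) = 0) ∧
    (∀ (h₁ : H) (w : W), extL lV lW r β₁ (0, h₁) (0, w) = 0) ∧
    (∀ (w : W) (h₁ : H), extR rV rW l β₂ (0, w) (0, h₁) = 0) ∧
    (∀ w : W, extOp R S γ (0, w) = (0, S w)) ∧
    (∀ p q : g × H, (extBr br lh rh α p q).1 = br p.1 q.1) ∧
    (∀ (p : g × H) (u : V × W), (extL lV lW r β₁ p u).1 = lV p.1 u.1) ∧
    (∀ (u : V × W) (p : g × H), (extR rV rW l β₂ u p).1 = rV u.1 p.1) ∧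
    (∀ u : V × W, (extOp R S γ u).1 = R u.1) := by
  simp only [IsLeibniz, IsLeibnizRep, IsRBO, IsRRBRep] at hg hrep hR hW
  obtain ⟨⟨b1, b2, b3⟩, ⟨c1, c2, c3⟩, m1, m2, m3, m4, m5, m6, rb1, rb2⟩ := hW
  obtain ⟨a1, a2, a3⟩ := hrep
  refine ⟨?_, ⟨?_, ?_, ?_⟩, ?_, ?_, ?_, ?_, ?_, ?_, ?_, ?_, ?_⟩
  · rintro ⟨x, h1⟩ ⟨y, h2⟩ ⟨z, h3⟩
    simp only [extBr, Prod.mk_add_mk, Prod.mk.injEq, map_add, LinearMap.add_apply]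
    refine ⟨hg x y z, ?_⟩
    linear_combination (norm := module) b1 x y h3 + b2 x z h2 + b3 y z h1 + hc1 x y z
  · rintro ⟨x, h1⟩ ⟨y, h2⟩ ⟨v, w⟩
    simp only [extBr, extL, Prod.mk_add_mk, Prod.mk.injEq, map_add, LinearMap.add_apply]
    refine ⟨a1 x y v, ?_⟩
    linear_combination (norm := module) c1 x y w + m4 x v h2 + m5 y v h1 + hc2 x y v
  · rintro ⟨x, h1⟩ ⟨y, h2⟩ ⟨v, w⟩
    simp only [extBr, extL, extR, Prod.mk_add_mk, Prod.mk.injEq, map_add,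
      LinearMap.add_apply]
    refine ⟨a2 x y v, ?_⟩
    linear_combination (norm := module) m1 x v h2 + c2 x y w + m6 y v h1 + hc3 x v y
  · rintro ⟨x, h1⟩ ⟨y, h2⟩ ⟨v, w⟩
    simp only [extBr, extL, extR, Prod.mk_add_mk, Prod.mk.injEq, map_add,
      LinearMap.add_apply]
    refine ⟨a3 x y v, ?_⟩
    linear_combination (norm := module) m2 x v h2 + m3 y v h1 + c3 x y w + hc4 v x y
  · rintro ⟨v1, w1⟩ ⟨v2, w2⟩
    simp only [extBr, extL, extR, extOp, Prod.mk_add_mk, Prod.mk.injEq, map_add,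
      LinearMap.add_apply]
    simp only [map_add] at hR hc5 rb1 rb2
    refine ⟨hR v1 v2, ?_⟩
    linear_combination (norm := module) rb1 v1 w2 + rb2 v2 w1 + hc5 v1 v2
  · intro h1 h2
    simp [extBr, Prod.ext_iff]
  · intro h1 w
    simp [extL, Prod.ext_iff]
  · intro w h1
    simp [extR, Prod.ext_iff]
  · intro w
    simp [extOp]
  · intro p q; rfl
  · intro p u; rfl
  · intro u p; rfl
  · intro u; rfl
end

section
/- Let V →^R g be a rRB Leibniz algebra, (W →^S h, l, r) a representation, and (α,β,γ), (α',β',γ') two 2-cocycles that are cohomologous, say (α,β,γ) - (α',β',γ') = δ'(κ,η) for some κ ∈ Hom(g,h), η ∈ Hom(V,W). Then the maps φ : g ⊕ h → g ⊕ h, φ(x,h₁) = (x, h₁ + κ(x)), and ψ : V ⊕ W → V ⊕ W, ψ(v,w) = (v, w + η(v)), constitute an isomorphism of the corresponding abelian extensions V̂ →^{R̂} ĝ and V̂' →^{R̂'} ĝ' built from the two cocycles. -/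
/-- cohomologous `2`-cocycles `(α,β,γ)` and `(α',β',γ')`, with
`(α,β,γ) - (α',β',γ') = δ'(κ,η)`, give isomorphic abelian extensions, via
`φ(x,h) = (x, h + κ(x))` and `ψ(v,w) = (v, w + η(v))`. -/
theorem cohomologous_cocycles_isomorphic_extensions
    {k g V H W : Type*} [Field k] [AddCommGroup g] [Module k g]
    [AddCommGroup V] [Module k V] [AddCommGroup H] [Module k H]
    [AddCommGroup W] [Module k W]
    (br : g →ₗ[k] g →ₗ[k] g) (lV : g →ₗ[k] V →ₗ[k] V) (rV : V →ₗ[k] g →ₗ[k] V)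
    (R : V →ₗ[k] g)
    (lh : g →ₗ[k] H →ₗ[k] H) (rh : H →ₗ[k] g →ₗ[k] H)
    (lW : g →ₗ[k] W →ₗ[k] W) (rW : W →ₗ[k] g →ₗ[k] W)
    (S : W →ₗ[k] H) (l : V →ₗ[k] H →ₗ[k] W) (r : H →ₗ[k] V →ₗ[k] W)
    (hg : IsLeibniz (fun x y => br x y))
    (hrep : IsLeibnizRep (fun x y => br x y) (fun x v => lV x v) (fun v x => rV v x))
    (hR : IsRBO (fun x y => br x y) (fun x v => lV x v) (fun v x => rV v x) (fun v => R v))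
    (hW : IsRRBRep (fun x y => br x y) (fun x v => lV x v) (fun v x => rV v x) (fun v => R v)
      (fun x hh => lh x hh) (fun hh x => rh hh x)
      (fun x w => lW x w) (fun w x => rW w x)
      (fun w => S w) (fun v hh => l v hh) (fun hh v => r hh v))
    (α : g →ₗ[k] g →ₗ[k] H) (β₁ : g →ₗ[k] V →ₗ[k] W) (β₂ : V →ₗ[k] g →ₗ[k] W)
    (γ : V →ₗ[k] H)
    (α' : g →ₗ[k] g →ₗ[k] H) (β₁' : g →ₗ[k] V →ₗ[k] W) (β₂' : V →ₗ[k] g →ₗ[k] W)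
    (γ' : V →ₗ[k] H)
    (hc1 : ∀ x y z, lh x (α y z) - lh y (α x z) - rh (α x y) z
      - α (br x y) z - α y (br x z) + α x (br y z) = 0)
    (hc2 : ∀ (x y : g) (v : V), lW x (β₁ y v) - lW y (β₁ x v) - r (α x y) v
      - β₁ (br x y) v - β₁ y (lV x v) + β₁ x (lV y v) = 0)
    (hc3 : ∀ (x : g) (v : V) (y : g), lW x (β₂ v y) - l v (α x y) - rW (β₁ x v) y
      - β₂ (lV x v) y - β₂ v (br x y) + β₁ x (rV v y) = 0)
    (hc4 : ∀ (v : V) (x y : g), l v (α x y) - lW x (β₂ v y) - rW (β₂ v x) y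
      - β₂ (rV v x) y - β₁ x (rV v y) + β₂ v (br x y) = 0)
    (hc5 : ∀ v₁ v₂ : V, lh (R v₁) (γ v₂) - S (l v₁ (γ v₂))
      + rh (γ v₁) (R v₂) - S (r (γ v₁) v₂)
      - γ (lV (R v₁) v₂ + rV v₁ (R v₂))
      + α (R v₁) (R v₂) - S (β₂ v₁ (R v₂)) - S (β₁ (R v₁) v₂) = 0)
    (hc'1 : ∀ x y z, lh x (α' y z) - lh y (α' x z) - rh (α' x y) z
      - α' (br x y) z - α' y (br x z) + α' x (br y z) = 0)
    (hc'2 : ∀ (x y : g) (v : V), lW x (β₁' y v) - lW y (β₁' x v) - r (α' x y) v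
      - β₁' (br x y) v - β₁' y (lV x v) + β₁' x (lV y v) = 0)
    (hc'3 : ∀ (x : g) (v : V) (y : g), lW x (β₂' v y) - l v (α' x y) - rW (β₁' x v) y
      - β₂' (lV x v) y - β₂' v (br x y) + β₁' x (rV v y) = 0)
    (hc'4 : ∀ (v : V) (x y : g), l v (α' x y) - lW x (β₂' v y) - rW (β₂' v x) y
      - β₂' (rV v x) y - β₁' x (rV v y) + β₂' v (br x y) = 0)
    (hc'5 : ∀ v₁ v₂ : V, lh (R v₁) (γ' v₂) - S (l v₁ (γ' v₂))
      + rh (γ' v₁) (R v₂) - S (r (γ' v₁) v₂)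
      - γ' (lV (R v₁) v₂ + rV v₁ (R v₂))
      + α' (R v₁) (R v₂) - S (β₂' v₁ (R v₂)) - S (β₁' (R v₁) v₂) = 0)
    (κ : g →ₗ[k] H) (η : V →ₗ[k] W)
    (hcb1 : ∀ x y, α x y - α' x y = lh x (κ y) + rh (κ x) y - κ (br x y))
    (hcb2 : ∀ (x : g) (v : V), β₁ x v - β₁' x v = lW x (η v) + r (κ x) v - η (lV x v))
    (hcb3 : ∀ (v : V) (x : g), β₂ v x - β₂' v x = l v (κ x) + rW (η v) x - η (rV v x))
    (hcb4 : ∀ v : V, γ v - γ' v = S (η v) - κ (R v)) :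
    Function.Bijective (fun p : g × H => (p.1, p.2 + κ p.1)) ∧
    Function.Bijective (fun u : V × W => (u.1, u.2 + η u.1)) ∧
    (∀ p q : g × H,
      (fun p : g × H => (p.1, p.2 + κ p.1)) (extBr br lh rh α p q)
        = extBr br lh rh α' ((fun p : g × H => (p.1, p.2 + κ p.1)) p)
            ((fun p : g × H => (p.1, p.2 + κ p.1)) q)) ∧
    (∀ (p : g × H) (u : V × W),
      (fun u : V × W => (u.1, u.2 + η u.1)) (extL lV lW r β₁ p u)
        = extL lV lW r β₁' ((fun p : g × H => (p.1, p.2 + κ p.1)) p)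
            ((fun u : V × W => (u.1, u.2 + η u.1)) u)) ∧
    (∀ (u : V × W) (p : g × H),
      (fun u : V × W => (u.1, u.2 + η u.1)) (extR rV rW l β₂ u p)
        = extR rV rW l β₂' ((fun u : V × W => (u.1, u.2 + η u.1)) u)
            ((fun p : g × H => (p.1, p.2 + κ p.1)) p)) ∧
    (∀ u : V × W,
      (fun p : g × H => (p.1, p.2 + κ p.1)) (extOp R S γ u)
        = extOp R S γ' ((fun u : V × W => (u.1, u.2 + η u.1)) u)) ∧
    (∀ h₁ : H, (fun p : g × H => (p.1, p.2 + κ p.1)) ((0 : g), h₁) = (0, h₁)) ∧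
    (∀ w : W, (fun u : V × W => (u.1, u.2 + η u.1)) ((0 : V), w) = (0, w)) ∧
    (∀ p : g × H, ((fun p : g × H => (p.1, p.2 + κ p.1)) p).1 = p.1) ∧
    (∀ u : V × W, ((fun u : V × W => (u.1, u.2 + η u.1)) u).1 = u.1) := by
  refine ⟨?_, ?_, ?_, ?_, ?_, ?_, ?_, ?_, ?_, ?_⟩
  · exact Function.bijective_iff_has_inverse.2
      ⟨fun p => (p.1, p.2 - κ p.1), fun p => by simp, fun p => by simp⟩
  · exact Function.bijective_iff_has_inverse.2
      ⟨fun u => (u.1, u.2 - η u.1), fun u => by simp, fun u => by simp⟩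
  · intro p q
    have h := hcb1 p.1 q.1
    simp only [extBr, Prod.mk.injEq]
    refine ⟨trivial, ?_⟩
    simp only [map_add, LinearMap.add_apply]
    linear_combination (norm := abel) h
  · intro p u
    have h := hcb2 p.1 u.1
    simp only [extL, Prod.mk.injEq]
    refine ⟨trivial, ?_⟩
    simp only [map_add, LinearMap.add_apply]
    linear_combination (norm := abel) h
  · intro u p
    have h := hcb3 u.1 p.1
    simp only [extR, Prod.mk.injEq]
    refine ⟨trivial, ?_⟩
    simp only [map_add, LinearMap.add_apply]
    linear_combination (norm := abel) h
  · intro u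
    have h := hcb4 u.1
    simp only [extOp, Prod.mk.injEq]
    refine ⟨trivial, ?_⟩
    simp only [map_add, LinearMap.add_apply]
    linear_combination (norm := abel) h
  · intro h₁; simp
  · intro w; simp
  · intro p; rfl
  · intro u; rfl
end

section
/- Let V →^R g be a rRB Leibniz algebra and let V̂ →^{R̂} ĝ be an abelian extension of it by the 2-term complex W →^S h, with a section (s, s̄) (p∘s = id_g, p̄∘s̄ = id_V). Define l_h(x,h₁) = [s(x), i(h₁)]_{ĝ}, r_h(h₁,x) = [i(h₁), s(x)]_{ĝ}, l_W(x,w) = l_{V̂}(s(x), ī(w)), r_W(w,x) = r_{V̂}(ī(w), s(x)), l(v,h₁) = l_{V̂}(s̄(v), i(h₁)), r(h₁,v) = r_{V̂}(i(h₁), s̄(v)). Then (W →^S h, l, r) is a representation of the rRB Leibniz algebra V →^R g, and this structure does not depend on the choice of section. -/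
/-- an abelian extension `V̂ →^{R̂} ĝ` of a rRB Leibniz algebra
`V →^R g` by a `2`-term complex `W →^S H` induces, via any section `(s, s̄)`, a
representation structure `(W →^S H, l, r)` on `W →^S H`, and this structure is
independent of the choice of section. -/
theorem abelian_extension_induces_rep
    {k g V H W Ghat Vhat : Type*} [Field k] [AddCommGroup g] [Module k g]
    [AddCommGroup V] [Module k V] [AddCommGroup H] [Module k H]
    [AddCommGroup W] [Module k W] [AddCommGroup Ghat] [Module k Ghat]
    [AddCommGroup Vhat] [Module k Vhat]
    -- the base rRB Leibniz algebra
    (br : g →ₗ[k] g →ₗ[k] g) (lV : g →ₗ[k] V →ₗ[k] V) (rV : V →ₗ[k] g →ₗ[k] V)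
    (R : V →ₗ[k] g)
    (hg : IsLeibniz (fun x y => br x y))
    (hrep : IsLeibnizRep (fun x y => br x y) (fun x v => lV x v) (fun v x => rV v x))
    (hR : IsRBO (fun x y => br x y) (fun x v => lV x v) (fun v x => rV v x) (fun v => R v))
    -- the middle rRB Leibniz algebra
    (brh : Ghat →ₗ[k] Ghat →ₗ[k] Ghat) (lVh : Ghat →ₗ[k] Vhat →ₗ[k] Vhat)
    (rVh : Vhat →ₗ[k] Ghat →ₗ[k] Vhat) (Rh : Vhat →ₗ[k] Ghat)
    (hgh : IsLeibniz (fun a b => brh a b))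
    (hreph : IsLeibnizRep (fun a b => brh a b) (fun a u => lVh a u) (fun u a => rVh u a))
    (hRh : IsRBO (fun a b => brh a b) (fun a u => lVh a u) (fun u a => rVh u a) (fun u => Rh u))
    -- the 2-term chain complex
    (S : W →ₗ[k] H)
    -- the short exact sequences
    (i : H →ₗ[k] Ghat) (p : Ghat →ₗ[k] g) (ibar : W →ₗ[k] Vhat) (pbar : Vhat →ₗ[k] V)
    (hi : Function.Injective i) (hp : Function.Surjective p)
    (hexact : LinearMap.range i = LinearMap.ker p)
    (hibar : Function.Injective ibar) (hpbar : Function.Surjective pbar)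
    (hexactbar : LinearMap.range ibar = LinearMap.ker pbar)
    -- `(i, ibar)` is a morphism of rRB Leibniz algebras from the trivial structure
    (hieq1 : ∀ h₁ h₂, brh (i h₁) (i h₂) = 0)
    (hieq2 : ∀ h₁ w, lVh (i h₁) (ibar w) = 0)
    (hieq3 : ∀ w h₁, rVh (ibar w) (i h₁) = 0)
    (hieq4 : ∀ w, Rh (ibar w) = i (S w))
    -- `(p, pbar)` is a morphism of rRB Leibniz algebras
    (hpeq1 : ∀ a b, p (brh a b) = br (p a) (p b))
    (hpeq2 : ∀ a u, pbar (lVh a u) = lV (p a) (pbar u))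
    (hpeq3 : ∀ u a, pbar (rVh u a) = rV (pbar u) (p a))
    (hpeq4 : ∀ u, p (Rh u) = R (pbar u))
    -- a section
    (s : g →ₗ[k] Ghat) (sbar : V →ₗ[k] Vhat)
    (hs : ∀ x, p (s x) = x) (hsbar : ∀ v, pbar (sbar v) = v) :
    ∃ (lh : g → H → H) (rh : H → g → H) (lW : g → W → W) (rW : W → g → W)
      (l : V → H → W) (r : H → V → W),
      (∀ x h₁, i (lh x h₁) = brh (s x) (i h₁)) ∧
      (∀ h₁ x, i (rh h₁ x) = brh (i h₁) (s x)) ∧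
      (∀ x w, ibar (lW x w) = lVh (s x) (ibar w)) ∧
      (∀ w x, ibar (rW w x) = rVh (ibar w) (s x)) ∧
      (∀ v h₁, ibar (l v h₁) = rVh (sbar v) (i h₁)) ∧
      (∀ h₁ v, ibar (r h₁ v) = lVh (i h₁) (sbar v)) ∧
      IsRRBRep (fun x y => br x y) (fun x v => lV x v) (fun v x => rV v x) (fun v => R v)
        lh rh lW rW (fun w => S w) l r ∧
      (∀ (s' : g →ₗ[k] Ghat) (sbar' : V →ₗ[k] Vhat),
        (∀ x, p (s' x) = x) → (∀ v, pbar (sbar' v) = v) →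
        (∀ x h₁, i (lh x h₁) = brh (s' x) (i h₁)) ∧
        (∀ h₁ x, i (rh h₁ x) = brh (i h₁) (s' x)) ∧
        (∀ x w, ibar (lW x w) = lVh (s' x) (ibar w)) ∧
        (∀ w x, ibar (rW w x) = rVh (ibar w) (s' x)) ∧
        (∀ v h₁, ibar (l v h₁) = rVh (sbar' v) (i h₁)) ∧
        (∀ h₁ v, ibar (r h₁ v) = lVh (i h₁) (sbar' v))) := by
  classical
  -- lifting functions
  have hjex : ∀ a : Ghat, ∃ h₁ : H, p a = 0 → i h₁ = a := by
    intro a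
    by_cases h : p a = 0
    · have ha : a ∈ LinearMap.range i := by rw [hexact]; exact h
      obtain ⟨h₁, hh₁⟩ := ha
      exact ⟨h₁, fun _ => hh₁⟩
    · exact ⟨0, fun hc => absurd hc h⟩
  choose jmap hj using hjex
  have hjbex : ∀ u : Vhat, ∃ w : W, pbar u = 0 → ibar w = u := by
    intro u
    by_cases h : pbar u = 0
    · have hu : u ∈ LinearMap.range ibar := by rw [hexactbar]; exact h
      obtain ⟨w, hw⟩ := hu
      exact ⟨w, fun _ => hw⟩
    · exact ⟨0, fun hc => absurd hc h⟩
  choose jb hjb using hjbex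
  -- p ∘ i = 0, pbar ∘ ibar = 0
  have hpi : ∀ h₁ : H, p (i h₁) = 0 := by
    intro h₁
    have : i h₁ ∈ LinearMap.ker p := by rw [← hexact]; exact ⟨h₁, rfl⟩
    exact this
  have hpbi : ∀ w : W, pbar (ibar w) = 0 := by
    intro w
    have : ibar w ∈ LinearMap.ker pbar := by rw [← hexactbar]; exact ⟨w, rfl⟩
    exact this
  -- correction lemmas
  have cg : ∀ a b : Ghat, p a = p b → ∃ h', a = b + i h' := by
    intro a b hab
    have hker : p (a - b) = 0 := by rw [map_sub, hab, sub_self]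
    have : a - b ∈ LinearMap.range i := by rw [hexact]; exact hker
    obtain ⟨h', hh'⟩ := this
    exact ⟨h', by rw [hh']; abel⟩
  have cv : ∀ u u' : Vhat, pbar u = pbar u' → ∃ w', u = u' + ibar w' := by
    intro u u' hab
    have hker : pbar (u - u') = 0 := by rw [map_sub, hab, sub_self]
    have : u - u' ∈ LinearMap.range ibar := by rw [hexactbar]; exact hker
    obtain ⟨w', hw'⟩ := this
    exact ⟨w', by rw [hw']; abel⟩
  have c1 : ∀ (a b : Ghat) (h₁ : H), p a = p b → brh a (i h₁) = brh b (i h₁) := by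
    intro a b h₁ hab
    obtain ⟨h', rfl⟩ := cg a b hab
    simp [map_add, hieq1]
  have c2 : ∀ (a b : Ghat) (h₁ : H), p a = p b → brh (i h₁) a = brh (i h₁) b := by
    intro a b h₁ hab
    obtain ⟨h', rfl⟩ := cg a b hab
    simp [map_add, hieq1]
  have c3 : ∀ (a b : Ghat) (w : W), p a = p b → lVh a (ibar w) = lVh b (ibar w) := by
    intro a b w hab
    obtain ⟨h', rfl⟩ := cg a b hab
    simp [map_add, hieq2]
  have c4 : ∀ (a b : Ghat) (w : W), p a = p b → rVh (ibar w) a = rVh (ibar w) b := by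
    intro a b w hab
    obtain ⟨h', rfl⟩ := cg a b hab
    simp [map_add, hieq3]
  have c5 : ∀ (u u' : Vhat) (h₁ : H), pbar u = pbar u' → lVh (i h₁) u = lVh (i h₁) u' := by
    intro u u' h₁ hab
    obtain ⟨w', rfl⟩ := cv u u' hab
    simp [map_add, hieq2]
  have c6 : ∀ (u u' : Vhat) (h₁ : H), pbar u = pbar u' → rVh u (i h₁) = rVh u' (i h₁) := by
    intro u u' h₁ hab
    obtain ⟨w', rfl⟩ := cv u u' hab
    simp [map_add, hieq3]
  -- defining equations
  have dlh : ∀ x h₁, i (jmap (brh (s x) (i h₁))) = brh (s x) (i h₁) := by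
    intro x h₁; exact hj _ (by simp [hpeq1, hpi])
  have drh : ∀ h₁ x, i (jmap (brh (i h₁) (s x))) = brh (i h₁) (s x) := by
    intro h₁ x; exact hj _ (by simp [hpeq1, hpi])
  have dlW : ∀ x w, ibar (jb (lVh (s x) (ibar w))) = lVh (s x) (ibar w) := by
    intro x w; exact hjb _ (by simp [hpeq2, hpbi])
  have drW : ∀ w x, ibar (jb (rVh (ibar w) (s x))) = rVh (ibar w) (s x) := by
    intro w x; exact hjb _ (by simp [hpeq3, hpbi])
  have dl : ∀ v h₁, ibar (jb (rVh (sbar v) (i h₁))) = rVh (sbar v) (i h₁) := by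
    intro v h₁; exact hjb _ (by simp [hpeq3, hpi])
  have dr : ∀ h₁ v, ibar (jb (lVh (i h₁) (sbar v))) = lVh (i h₁) (sbar v) := by
    intro h₁ v; exact hjb _ (by simp [hpeq2, hpi])
  have hps : ∀ x y, p (brh (s x) (s y)) = p (s (br x y)) := by
    intro x y; rw [hpeq1, hs, hs, hs]
  have hpbl : ∀ x v, pbar (lVh (s x) (sbar v)) = pbar (sbar (lV x v)) := by
    intro x v; rw [hpeq2, hs, hsbar, hsbar]
  have hpbr : ∀ v x, pbar (rVh (sbar v) (s x)) = pbar (sbar (rV v x)) := by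
    intro v x; rw [hpeq3, hs, hsbar, hsbar]
  refine ⟨fun x h₁ => jmap (brh (s x) (i h₁)), fun h₁ x => jmap (brh (i h₁) (s x)),
    fun x w => jb (lVh (s x) (ibar w)), fun w x => jb (rVh (ibar w) (s x)),
    fun v h₁ => jb (rVh (sbar v) (i h₁)), fun h₁ v => jb (lVh (i h₁) (sbar v)),
    dlh, drh, dlW, drW, dl, dr,
    ⟨⟨?_, ?_, ?_⟩, ⟨?_, ?_, ?_⟩, ?_, ?_, ?_, ?_, ?_, ?_, ?_, ?_⟩, ?_⟩
  · intro x y h₁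
    apply hi
    rw [map_add, dlh x (jmap (brh (s y) (i h₁))), dlh (br x y) h₁,
      dlh y (jmap (brh (s x) (i h₁))), dlh y h₁, dlh x h₁,
      ← c1 (brh (s x) (s y)) (s (br x y)) h₁ (hps x y)]
    exact hgh (s x) (s y) (i h₁)
  · intro x y h₁
    apply hi
    rw [map_add, dlh x (jmap (brh (i h₁) (s y))), drh h₁ y,
      drh (jmap (brh (s x) (i h₁))) y, dlh x h₁, drh h₁ (br x y),
      ← c2 (brh (s x) (s y)) (s (br x y)) h₁ (hps x y)]
    exact hgh (s x) (i h₁) (s y)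
  · intro x y h₁
    apply hi
    rw [map_add, drh h₁ (br x y), drh (jmap (brh (i h₁) (s x))) y, drh h₁ x,
      dlh x (jmap (brh (i h₁) (s y))), drh h₁ y,
      ← c2 (brh (s x) (s y)) (s (br x y)) h₁ (hps x y)]
    exact hgh (i h₁) (s x) (s y)
  · intro x y w
    apply hibar
    rw [map_add, dlW x (jb (lVh (s y) (ibar w))), dlW y w, dlW (br x y) w,
      dlW y (jb (lVh (s x) (ibar w))), dlW x w,
      ← c3 (brh (s x) (s y)) (s (br x y)) w (hps x y)]
    exact hreph.1 (s x) (s y) (ibar w)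
  · intro x y w
    apply hibar
    rw [map_add, dlW x (jb (rVh (ibar w) (s y))), drW w y,
      drW (jb (lVh (s x) (ibar w))) y, dlW x w, drW w (br x y),
      ← c4 (brh (s x) (s y)) (s (br x y)) w (hps x y)]
    exact hreph.2.1 (s x) (s y) (ibar w)
  · intro x y w
    apply hibar
    rw [map_add, drW w (br x y), drW (jb (rVh (ibar w) (s x))) y, drW w x,
      dlW x (jb (rVh (ibar w) (s y))), drW w y,
      ← c4 (brh (s x) (s y)) (s (br x y)) w (hps x y)]
    exact hreph.2.2 (s x) (s y) (ibar w)
  · intro x v hh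
    apply hibar
    rw [map_add, dlW x (jb (rVh (sbar v) (i hh))), dl v hh, dl (lV x v) hh,
      dl v (jmap (brh (s x) (i hh))), dlh x hh,
      ← c6 (lVh (s x) (sbar v)) (sbar (lV x v)) hh (hpbl x v)]
    exact hreph.2.1 (s x) (i hh) (sbar v)
  · intro x v hh
    apply hibar
    rw [map_add, dl v (jmap (brh (s x) (i hh))), dlh x hh, dl (rV v x) hh,
      dlW x (jb (rVh (sbar v) (i hh))), dl v hh,
      ← c6 (rVh (sbar v) (s x)) (sbar (rV v x)) hh (hpbr v x)]
    exact hreph.2.2 (s x) (i hh) (sbar v)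
  · intro x v hh
    apply hibar
    rw [map_add, dl v (jmap (brh (i hh) (s x))), drh hh x,
      drW (jb (rVh (sbar v) (i hh))) x, dl v hh, dr hh (rV v x),
      c5 (sbar (rV v x)) (rVh (sbar v) (s x)) hh (hpbr v x).symm]
    exact hreph.2.2 (i hh) (s x) (sbar v)
  · intro x v hh
    apply hibar
    rw [map_add, dlW x (jb (lVh (i hh) (sbar v))), dr hh v,
      dr (jmap (brh (s x) (i hh))) v, dlh x hh, dr hh (lV x v),
      c5 (sbar (lV x v)) (lVh (s x) (sbar v)) hh (hpbl x v).symm]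
    exact hreph.1 (s x) (i hh) (sbar v)
  · intro x v hh
    apply hibar
    rw [map_add, dr hh (lV x v), dr (jmap (brh (i hh) (s x))) v, drh hh x,
      dlW x (jb (lVh (i hh) (sbar v))), dr hh v,
      c5 (sbar (lV x v)) (lVh (s x) (sbar v)) hh (hpbl x v).symm]
    exact hreph.1 (i hh) (s x) (sbar v)
  · intro x v hh
    apply hibar
    rw [map_add, dr hh (rV v x), drW (jb (lVh (i hh) (sbar v))) x, dr hh v,
      dl v (jmap (brh (i hh) (s x))), drh hh x,
      c5 (sbar (rV v x)) (rVh (sbar v) (s x)) hh (hpbr v x).symm]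
    exact hreph.2.1 (i hh) (s x) (sbar v)
  · intro v w
    apply hi
    have hpRv : p (Rh (sbar v)) = p (s (R v)) := by rw [hpeq4, hsbar, hs]
    rw [dlh (R v) (S w),
      ← hieq4 (jb (lVh (s (R v)) (ibar w)) + jb (rVh (sbar v) (i (S w)))),
      map_add, dlW (R v) w, dl v (S w)]
    calc brh (s (R v)) (i (S w))
        = brh (Rh (sbar v)) (i (S w)) := (c1 _ _ _ hpRv).symm
      _ = brh (Rh (sbar v)) (Rh (ibar w)) := by rw [hieq4]
      _ = Rh (lVh (Rh (sbar v)) (ibar w) + rVh (sbar v) (Rh (ibar w))) := hRh (sbar v) (ibar w)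
      _ = Rh (lVh (s (R v)) (ibar w) + rVh (sbar v) (i (S w))) := by
          rw [c3 _ _ _ hpRv, hieq4]
  · intro v w
    apply hi
    have hpRv : p (Rh (sbar v)) = p (s (R v)) := by rw [hpeq4, hsbar, hs]
    rw [drh (S w) (R v),
      ← hieq4 (jb (lVh (i (S w)) (sbar v)) + jb (rVh (ibar w) (s (R v)))),
      map_add, dr (S w) v, drW w (R v)]
    calc brh (i (S w)) (s (R v))
        = brh (i (S w)) (Rh (sbar v)) := (c2 _ _ _ hpRv).symm
      _ = brh (Rh (ibar w)) (Rh (sbar v)) := by rw [hieq4]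
      _ = Rh (lVh (Rh (ibar w)) (sbar v) + rVh (ibar w) (Rh (sbar v))) := hRh (ibar w) (sbar v)
      _ = Rh (lVh (i (S w)) (sbar v) + rVh (ibar w) (s (R v))) := by
          rw [c4 _ _ _ hpRv, hieq4]
  · intro s' sbar' hs' hsbar'
    refine ⟨?_, ?_, ?_, ?_, ?_, ?_⟩
    · intro x h₁; rw [dlh]; exact c1 _ _ _ (by rw [hs, hs'])
    · intro h₁ x; rw [drh]; exact c2 _ _ _ (by rw [hs, hs'])
    · intro x w; rw [dlW]; exact c3 _ _ _ (by rw [hs, hs'])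
    · intro w x; rw [drW]; exact c4 _ _ _ (by rw [hs, hs'])
    · intro v h₁; rw [dl]; exact c6 _ _ _ (by rw [hsbar, hsbar'])
    · intro h₁ v; rw [dr]; exact c5 _ _ _ (by rw [hsbar, hsbar'])
end
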